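/- Orthogonality of Pauli strings: For n ≥ 1 and f, g : Fin n → Fin 4, the trace of (P_f)ᴴ · P_g equals 2^n if f = g and equals 0 if f ≠ g. Consequently, the 4^n Pauli strings are linearly independent and form a basis of the space of 2^n × 2^n complex matrices. -/
import Mathlib


open Matrix Finset

/-- The four single-qubit Pauli matrices: identity, X, Y, Z. -/
noncomputable def pauli : Fin 4 → Matrix (Fin 2) (Fin 2) ℂ
  | 0 => 1
  | 1 => !![0, 1; 1, 0]
  | 2 => !![0, -Complex.I; Complex.I, 0]
  | 3 => !![1, 0; 0, -1]

/-- The `n`-qubit Pauli string associated to `f : Fin n → Fin 4`. -/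
noncomputable def PauliString (n : ℕ) (f : Fin n → Fin 4) :
    Matrix (Fin n → Fin 2) (Fin n → Fin 2) ℂ :=
  fun x y => ∏ i, pauli (f i) (x i) (y i)


lemma pauli_trace (a b : Fin 4) :
    Matrix.trace ((pauli a)ᴴ * pauli b) = if a = b then 2 else 0 := by
  fin_cases a <;> fin_cases b <;>
    simp [pauli, Matrix.trace, Matrix.mul_apply, Fin.sum_univ_two, Matrix.one_apply,
      Matrix.conjTranspose_apply, Complex.ext_iff] <;> norm_num

lemma pauliString_trace (n : ℕ) (f g : Fin n → Fin 4) :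
    Matrix.trace ((PauliString n f)ᴴ * PauliString n g) =
      ∏ i, Matrix.trace ((pauli (f i))ᴴ * pauli (g i)) := by
  classical
  have h1 : ∀ i : Fin n, Matrix.trace ((pauli (f i))ᴴ * pauli (g i)) =
      ∑ p : Fin 2 × Fin 2, star (pauli (f i) p.2 p.1) * pauli (g i) p.2 p.1 := by
    intro i
    rw [Fintype.sum_prod_type]
    simp [Matrix.trace, Matrix.mul_apply, Matrix.conjTranspose_apply]
  simp_rw [h1]
  rw [Fintype.prod_sum]
  have h2 : (∑ z : Fin n → Fin 2 × Fin 2,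
        ∏ i, star (pauli (f i) (z i).2 (z i).1) * pauli (g i) (z i).2 (z i).1)
      = ∑ q : (Fin n → Fin 2) × (Fin n → Fin 2),
        ∏ i, star (pauli (f i) (q.2 i) (q.1 i)) * pauli (g i) (q.2 i) (q.1 i) :=
    Fintype.sum_equiv (Equiv.arrowProdEquivProdArrow _ _ _) _ _ (fun z => rfl)
  rw [h2]
  rw [Fintype.sum_prod_type]
  simp [Matrix.trace, Matrix.mul_apply, Matrix.conjTranspose_apply, PauliString,
    star_prod, Finset.prod_mul_distrib]

lemma pauli_orth (n : ℕ) (f g : Fin n → Fin 4) :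
    Matrix.trace ((PauliString n f)ᴴ * PauliString n g) =
      if f = g then (2 : ℂ) ^ n else 0 := by
  rw [pauliString_trace]
  by_cases h : f = g
  · simp [h, pauli_trace]
  · obtain ⟨i, hi⟩ := Function.ne_iff.mp h
    rw [if_neg h]
    exact Finset.prod_eq_zero (Finset.mem_univ i) (by simp [pauli_trace, hi])


/-- **Orthogonality of Pauli strings**: the trace of `P_f† P_g` is `2^n` if `f = g`
and `0` otherwise; consequently the Pauli strings are linearly independent and
span the full matrix space (i.e. they form a basis). -/
theorem pauli_orthogonality (n : ℕ) (hn : 1 ≤ n) :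
    (∀ f g : Fin n → Fin 4,
      Matrix.trace ((PauliString n f)ᴴ * PauliString n g) =
        if f = g then (2 : ℂ) ^ n else 0) ∧
    LinearIndependent ℂ (PauliString n) ∧
    Submodule.span ℂ (Set.range (PauliString n)) = ⊤ := by
  have two_ne : (2 : ℂ) ^ n ≠ 0 := pow_ne_zero _ two_ne_zero
  have li : LinearIndependent ℂ (PauliString n) := by
    rw [Fintype.linearIndependent_iff]
    intro c hc g
    have h := congrArg (fun M => Matrix.trace ((PauliString n g)ᴴ * M)) hc
    simp only [Matrix.mul_sum, Matrix.mul_smul, Matrix.trace_sum, Matrix.trace_smul,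
      Matrix.mul_zero, Matrix.trace_zero] at h
    simp_rw [pauli_orth] at h
    simp only [smul_eq_mul, mul_ite, mul_zero, Finset.sum_ite_eq, Finset.mem_univ,
      if_true] at h
    exact (mul_eq_zero.mp h).resolve_right two_ne
  refine ⟨pauli_orth n, li, ?_⟩
  apply li.span_eq_top_of_card_eq_finrank
  rw [Module.finrank_matrix]
  simp [Fintype.card_fun]
  rw [← mul_pow]
  norm_num
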